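/- Let B = (b_1, …, b_n) ∈ ℝ^{m×n} be a basis with n = pk + d for integers p ≥ 1, d ≥ k ≥ 2, let δ ≥ 1, and let γ_k ≥ 1 be an admissible Hermite bound for rank k. Assume that for each i ∈ [0, p−1] the block B_{[ik+d+1,(i+1)k+d]} is δ-SVP-reduced, and for each i ∈ [0, p−2] the block B_{[ik+d+2,(i+1)k+d+1]} is δ-DSVP-reduced. Then B_{[d+1,n]} is δ(δ²γ_k)^{(n−d−k)/(k−1)}-SVP-reduced, i.e., ‖b*_{d+1}‖ ≤ δ·(δ²γ_k)^{(n−d−k)/(k−1)} · λ_1(L(B_{[d+1,n]})). -/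

import Mathlib

/-!
Write `aᵢ = ‖b*ᵢ‖`. For a block `B_{[s+1,s+k]}`, SVP-reduction together with the Hermite bound
gives `a_{s+1}^{2k} ≤ (δ²γ_k)^k ∏_{j ≤ k} a_{s+j}²` (the volume of the block is the product of its
Gram–Schmidt norms), and SVP-reduction of the reversed dual of the shifted block
`B_{[s+2,s+k+1]}`, whose first vector has norm at least `1 / a_{s+k+1}`, gives
`∏_{2 ≤ j ≤ k+1} a_{s+j}² ≤ (δ²γ_k)^k a_{s+k+1}^{2k}`. The two products differ only in their end
factors, so `a_{s+1}^{k-1} ≤ (δ²γ_k)^k a_{s+k+1}^{k-1}`; chaining over the blocks gives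
`a_{d+1}^{k-1} ≤ (δ²γ_k)^{kt} a_{d+tk+1}^{k-1}`.

A nonzero `x ∈ L(B_{[d+1,n]})` whose last nonzero coordinate lies in block `t` projects under
`π_{d+tk+1}` to a nonzero vector of `L(B_{[d+tk+1,d+tk+k]})` of norm at most `‖x‖`, so
`a_{d+tk+1} ≤ δ‖x‖` by SVP-reduction of that block. Taking `(k-1)`-th roots bounds `a_{d+1}`.
-/

noncomputable section

/-- Euclidean space `ℝ^m`. -/
abbrev Euc (m : ℕ) : Type := EuclideanSpace ℝ (Fin m)

variable {m : ℕ}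

/-- `projGS B s` is the orthogonal projection `π_{s+1}` onto the subspace orthogonal to
`b_1, …, b_s` (0-based: orthogonal to `B 0, …, B (s-1)`). -/
def projGS (B : ℕ → Euc m) (s : ℕ) (x : Euc m) : Euc m :=
  (Submodule.orthogonalProjectionOnto ((Submodule.span ℝ (B '' Set.Iio s))ᗮ) x : Euc m)

/-- The Gram–Schmidt vector `b*_{i+1}` (0-based index `i`). -/
def gsoVec (B : ℕ → Euc m) (i : ℕ) : Euc m := projGS B i (B i)

/-- The projected block `B_{[s+1, s+ℓ]}` (0-based start `s`; the length is supplied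
separately to the predicates below). -/
def block (B : ℕ → Euc m) (s : ℕ) : ℕ → Euc m := fun t => projGS B s (B (s + t))

/-- Gram matrix of the first `ℓ` vectors. -/
def gram (B : ℕ → Euc m) (ℓ : ℕ) : Matrix (Fin ℓ) (Fin ℓ) ℝ :=
  Matrix.of fun i j => (inner ℝ (B i) (B j) : ℝ)

/-- `vol(L(B)) = det(BᵀB)^{1/2}` for the first `ℓ` vectors. -/
def volB (B : ℕ → Euc m) (ℓ : ℕ) : ℝ := Real.sqrt (gram B ℓ).det

/-- The lattice generated by the first `ℓ` vectors. -/
def latticeSpan (B : ℕ → Euc m) (ℓ : ℕ) : Submodule ℤ (Euc m) :=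
  Submodule.span ℤ (B '' Set.Iio ℓ)

/-- `λ₁(L)`: the minimum norm of a nonzero lattice vector. -/
def lambda1 (L : Submodule ℤ (Euc m)) : ℝ :=
  sInf {r : ℝ | ∃ x ∈ L, x ≠ 0 ∧ ‖x‖ = r}

/-- `B` (of rank `ℓ`) is `δ`-SVP-reduced. -/
def SVPReduced (δ : ℝ) (B : ℕ → Euc m) (ℓ : ℕ) : Prop :=
  ‖B 0‖ ≤ δ * lambda1 (latticeSpan B ℓ)

/-- `B` (of rank `ℓ`) is `δ`-HSVP-reduced. -/
def HSVPReduced (δ : ℝ) (B : ℕ → Euc m) (ℓ : ℕ) : Prop :=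
  ‖B 0‖ ≤ δ * volB B ℓ ^ ((1 : ℝ) / ℓ)

/-- The dual basis `B^× = B (BᵀB)⁻¹` of the first `ℓ` vectors (extended by `0`). -/
def dualFam (B : ℕ → Euc m) (ℓ : ℕ) : ℕ → Euc m := fun i =>
  if h : i < ℓ then ∑ j : Fin ℓ, ((gram B ℓ)⁻¹ j ⟨i, h⟩) • B j else 0

/-- The reversed dual basis `B^{-s}`. -/
def revDual (B : ℕ → Euc m) (ℓ : ℕ) : ℕ → Euc m := fun i => dualFam B ℓ (ℓ - 1 - i)

/-- `B` (of rank `ℓ`) is `δ`-DHSVP-reduced: its reversed dual basis is `δ`-HSVP-reduced. -/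
def DHSVPReduced (δ : ℝ) (B : ℕ → Euc m) (ℓ : ℕ) : Prop :=
  HSVPReduced δ (revDual B ℓ) ℓ

/-- `B = (b_1, …, b_{d+1})` is `δ`-twin-reduced: `B_{[1,d]}` is `δ`-HSVP-reduced and
`B_{[2,d+1]}` is `δ`-DHSVP-reduced. -/
def TwinReduced (δ : ℝ) (B : ℕ → Euc m) (d : ℕ) : Prop :=
  HSVPReduced δ (block B 0) d ∧ DHSVPReduced δ (block B 1) d

/-- Gram–Schmidt coefficient `μ_{i,j}` (0-based). -/
def mu (B : ℕ → Euc m) (i j : ℕ) : ℝ :=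
  (inner ℝ (B i) (gsoVec B j) : ℝ) / ‖gsoVec B j‖ ^ 2

/-- The first `ℓ` vectors are size-reduced. -/
def SizeReduced (B : ℕ → Euc m) (ℓ : ℕ) : Prop :=
  ∀ i j, j < i → i < ℓ → |mu B i j| ≤ 1 / 2

/-- The first `ℓ` vectors are `ε`-LLL-reduced. -/
def LLLReduced (ε : ℝ) (B : ℕ → Euc m) (ℓ : ℕ) : Prop :=
  SizeReduced B ℓ ∧
    ∀ i, 0 < i → i < ℓ →
      ‖gsoVec B (i - 1)‖ ^ 2 ≤ (1 + ε) * ‖mu B i (i - 1) • gsoVec B (i - 1) + gsoVec B i‖ ^ 2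

/-- `B` (of rank `ℓ`) is `δ`-DSVP-reduced: its reversed dual basis is `δ`-SVP-reduced
and `B` is `(1/3)`-LLL-reduced. -/
def DSVPReduced (δ : ℝ) (B : ℕ → Euc m) (ℓ : ℕ) : Prop :=
  SVPReduced δ (revDual B ℓ) ℓ ∧ LLLReduced (1 / 3) B ℓ

/-- `γ` is an admissible Hermite bound for rank `r`: every lattice generated by `r`
linearly independent vectors of a Euclidean space satisfies `λ₁² ≤ γ · vol^{2/r}`. -/
def IsHermiteBound (γ : ℝ) (r : ℕ) : Prop :=
  ∀ (m' : ℕ) (v : ℕ → Euc m'), LinearIndependent ℝ (fun i : Fin r => v i) →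
    lambda1 (latticeSpan v r) ^ 2 ≤ γ * volB v r ^ ((2 : ℝ) / r)

open Submodule InnerProductSpace
open scoped Matrix

theorem mem_orthogonal_span_iff {E : Type*} [NormedAddCommGroup E] [InnerProductSpace ℝ E]
    {S : Set E} {v : E} : v ∈ (span ℝ S)ᗮ ↔ ∀ u ∈ S, inner ℝ u v = (0 : ℝ) := by
  rw [← span_singleton_le_iff_mem, ← isOrtho_iff_le, isOrtho_comm, isOrtho_span]
  simp

section GramMatrix

variable {E : Type*} [NormedAddCommGroup E] [InnerProductSpace ℝ E]
  {ι κ : Type*}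

theorem gram_sum_smul [Fintype ι] (M : Matrix κ ι ℝ) (w : ι → E) :
    Matrix.gram ℝ (fun i => ∑ u, M i u • w u) = M * Matrix.gram ℝ w * Mᵀ := by
  ext i j
  simp only [Matrix.gram_apply, sum_inner, inner_sum, real_inner_smul_left, real_inner_smul_right,
    Matrix.mul_apply, Matrix.transpose_apply, Finset.sum_mul]
  exact Finset.sum_congr rfl fun _ _ => Finset.sum_congr rfl fun _ _ => by ring

theorem gram_eq_diagonal_of_orthogonal [DecidableEq ι] {w : ι → E}
    (hw : Pairwise fun u v => inner ℝ (w u) (w v) = (0 : ℝ)) :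
    Matrix.gram ℝ w = Matrix.diagonal fun u => ‖w u‖ ^ 2 := by
  ext u v
  rcases eq_or_ne u v with rfl | huv
  · simp [Matrix.gram_apply]
  · simp [Matrix.gram_apply, hw huv, huv]

end GramMatrix

theorem pow_le_mul_pow_of_mul_sq_eq {u w P P' Q : ℝ} {j : ℕ} (hu : 0 < u) (hw : 0 < w)
    (hQ : 0 ≤ Q) (hP : u ^ (2 * (j + 1)) ≤ Q * P) (hP' : P' ≤ Q * w ^ (2 * (j + 1)))
    (hprod : P * w ^ 2 = u ^ 2 * P') : u ^ j ≤ Q * w ^ j := by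
  have key : (u ^ j) ^ 2 * (u ^ 2 * w ^ 2) ≤ (Q * w ^ j) ^ 2 * (u ^ 2 * w ^ 2) :=
    calc (u ^ j) ^ 2 * (u ^ 2 * w ^ 2) = u ^ (2 * (j + 1)) * w ^ 2 := by ring
      _ ≤ Q * P * w ^ 2 := by gcongr
      _ = Q * u ^ 2 * P' := by rw [mul_assoc, hprod, mul_assoc]
      _ ≤ Q * u ^ 2 * (Q * w ^ (2 * (j + 1))) := by gcongr
      _ = (Q * w ^ j) ^ 2 * (u ^ 2 * w ^ 2) := by ring
  exact (pow_le_pow_iff_left₀ (by positivity) (by positivity) two_ne_zero).mp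
    (le_of_mul_le_mul_right key (by positivity))

theorem le_pow_mul_of_le_mul_succ {f : ℕ → ℝ} {c : ℝ} {T : ℕ} (hc : 0 ≤ c)
    (h : ∀ i < T, f i ≤ c * f (i + 1)) : ∀ t ≤ T, f 0 ≤ c ^ t * f t
  | 0, _ => by simp
  | t + 1, ht =>
    calc f 0 ≤ c ^ t * f t := le_pow_mul_of_le_mul_succ hc h t (by omega)
      _ ≤ c ^ t * (c * f (t + 1)) := mul_le_mul_of_nonneg_left (h t (by omega)) (by positivity)
      _ = c ^ (t + 1) * f (t + 1) := by ring

theorem le_rpow_div_mul_of_pow_le {a b q : ℝ} {M N : ℕ} (ha : 0 ≤ a) (hb : 0 ≤ b) (hq : 0 ≤ q)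
    (hN : N ≠ 0) (h : a ^ N ≤ q ^ M * b ^ N) : a ≤ q ^ ((M : ℝ) / N) * b := by
  rw [← pow_le_pow_iff_left₀ ha (by positivity) hN, mul_pow, ← Real.rpow_natCast (q ^ _) N,
    ← Real.rpow_mul hq, div_mul_cancel₀ _ (Nat.cast_ne_zero.mpr hN), Real.rpow_natCast]
  exact h

theorem image_fin_val_preimage {α : Type*} (f : ℕ → α) {L : ℕ} {S : Set ℕ}
    (hS : S ⊆ Set.Iio L) : (fun i : Fin L => f i) '' (Fin.val ⁻¹' S) = f '' S := by
  rw [show (fun i : Fin L => f i) = f ∘ Fin.val from rfl, Set.image_comp,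
    Set.image_preimage_eq_inter_range, Fin.range_val, Set.inter_eq_left.mpr hS]

def prefixSpan (B : ℕ → Euc m) (s : ℕ) : Submodule ℝ (Euc m) := span ℝ (B '' Set.Iio s)

section projGS

variable (B : ℕ → Euc m) (s : ℕ)

theorem projGS_apply (x : Euc m) : projGS B s x = (prefixSpan B s)ᗮ.starProjection x := rfl

theorem projGS_mem_orthogonal (x : Euc m) : projGS B s x ∈ (prefixSpan B s)ᗮ :=
  starProjection_apply_mem _ x

theorem sub_projGS_mem (x : Euc m) : x - projGS B s x ∈ prefixSpan B s := by
  simp [projGS_apply]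

theorem projGS_eq_zero_iff {x : Euc m} : projGS B s x = 0 ↔ x ∈ prefixSpan B s := by
  rw [projGS_apply, starProjection_apply_eq_zero_iff, orthogonal_orthogonal]

theorem norm_projGS_le (x : Euc m) : ‖projGS B s x‖ ≤ ‖x‖ := norm_starProjection_apply_le _ x

variable {B s}

theorem projGS_eq_of_mem_of_sub_mem {x v : Euc m} (hv : v ∈ (prefixSpan B s)ᗮ)
    (hxv : x - v ∈ prefixSpan B s) : projGS B s x = v :=
  eq_starProjection_of_mem_orthogonal hv (by rwa [orthogonal_orthogonal])

theorem projGS_of_mem_orthogonal {x : Euc m} (hx : x ∈ (prefixSpan B s)ᗮ) : projGS B s x = x :=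
  starProjection_eq_self_iff.mpr hx

theorem prefixSpan_mono {s s' : ℕ} (h : s ≤ s') : prefixSpan B s ≤ prefixSpan B s' :=
  span_mono (Set.image_mono (Set.Iio_subset_Iio h))

theorem mem_prefixSpan {w : ℕ} (h : w < s) : B w ∈ prefixSpan B s := subset_span ⟨w, h, rfl⟩

end projGS

theorem gsoVec_eq_gramSchmidt (B : ℕ → Euc m) : gsoVec B = gramSchmidt ℝ B := by
  ext1 n
  refine projGS_eq_of_mem_of_sub_mem ?_ ?_
  · rw [prefixSpan, ← span_gramSchmidt_Iio ℝ B, mem_orthogonal_span_iff]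
    rintro _ ⟨i, hi, rfl⟩
    exact gramSchmidt_orthogonal ℝ B (ne_of_lt hi)
  · nth_rewrite 1 [gramSchmidt_def' ℝ B n]
    rw [add_sub_cancel_left, prefixSpan, ← span_gramSchmidt_Iio ℝ B]
    refine sum_mem fun i hi => ?_
    rw [starProjection_singleton]
    exact smul_mem _ _ (subset_span ⟨i, Finset.mem_Iio.mp hi, rfl⟩)

section GramSchmidt

variable (B : ℕ → Euc m)

theorem sub_gsoVec_mem (i : ℕ) : B i - gsoVec B i ∈ prefixSpan B i := sub_projGS_mem B i (B i)

theorem inner_gsoVec_eq_zero {i j : ℕ} (h : i ≠ j) :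
    inner ℝ (gsoVec B i) (gsoVec B j) = (0 : ℝ) := by
  rw [gsoVec_eq_gramSchmidt]
  exact gramSchmidt_orthogonal ℝ B h

theorem gsoVec_ne_zero {n : ℕ} (hB : LinearIndependent ℝ (fun i : Fin n => B i)) {i : ℕ}
    (hi : i < n) : gsoVec B i ≠ 0 := by
  rw [gsoVec_eq_gramSchmidt]
  exact gramSchmidt_ne_zero_coe i <| hB.comp (fun j : Set.Iic i => ⟨j, lt_of_le_of_lt j.2 hi⟩)
    fun _ _ h => Subtype.ext (congrArg Fin.val h)

theorem gsoVec_add_sum_mu (i : ℕ) :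
    gsoVec B i + ∑ j ∈ Finset.range i, mu B i j • gsoVec B j = B i := by
  rw [gramSchmidt_def'' ℝ B i, Nat.Iio_eq_range]
  simp [mu, gsoVec_eq_gramSchmidt, real_inner_comm]

end GramSchmidt

theorem sum_range_mu_smul_gsoVec (B : ℕ → Euc m) {i l : ℕ} (hi : i < l) :
    ∑ j ∈ Finset.range l,
      (if j < i then mu B i j else if j = i then 1 else 0) • gsoVec B j = B i := by
  rw [← Finset.sum_subset (Finset.range_subset_range.mpr hi)
    fun j _ hj => by
      rw [Finset.mem_range] at hj
      rw [if_neg (by omega), if_neg (by omega), zero_smul]]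
  rw [Finset.sum_range_succ, ← gsoVec_add_sum_mu B i, add_comm]
  simp only [lt_irrefl, if_false, if_true, one_smul]
  congr 1
  exact Finset.sum_congr rfl fun j hj => by rw [if_pos (Finset.mem_range.mp hj)]

open Matrix in
theorem det_gram_eq_prod_norm_sq (B : ℕ → Euc m) (l : ℕ) :
    (gram B l).det = ∏ u : Fin l, ‖gsoVec B u‖ ^ 2 := by
  let M : Matrix (Fin l) (Fin l) ℝ := of fun i u =>
    if (u : ℕ) < i then mu B i u else if (u : ℕ) = i then 1 else 0
  have hM : M.det = 1 := by
    rw [det_of_isLowerTriangular M fun i u (hiu : i < u) => ?_]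
    · simp [M]
    · simp [M, not_lt_of_gt hiu, (ne_of_gt hiu : (u : ℕ) ≠ i)]
  have hrep : (fun i : Fin l => B i) = fun i => ∑ u, M i u • gsoVec B u := by
    funext i
    rw [← sum_range_mu_smul_gsoVec B i.2, ← Fin.sum_univ_eq_sum_range]
    rfl
  have hdiag := gram_eq_diagonal_of_orthogonal (w := fun u : Fin l => gsoVec B u)
    fun u v huv => inner_gsoVec_eq_zero B (Fin.val_injective.ne huv)
  change (Matrix.gram ℝ fun i : Fin l => B i).det = _
  rw [hrep, gram_sum_smul, hdiag, det_mul, det_mul, det_transpose, hM, det_diagonal, one_mul,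
    mul_one]

section Blocks

variable (B : ℕ → Euc m)

theorem block_mem_prefixSpan {s u w : ℕ} (h : s + u < w) : block B s u ∈ prefixSpan B w := by
  have hsub := sub_projGS_mem B s (B (s + u))
  rw [← sub_sub_cancel (B (s + u)) (block B s u)]
  exact sub_mem (mem_prefixSpan h) (prefixSpan_mono (by omega) hsub)

theorem prefixSpan_block_le (s j : ℕ) : prefixSpan (block B s) j ≤ prefixSpan B (s + j) :=
  span_le.mpr <| Set.image_subset_iff.mpr fun _ hu => block_mem_prefixSpan B (by simp_all)

theorem projGS_image_subset (s j : ℕ) :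
    projGS B s '' (B '' Set.Iio (s + j)) ⊆ insert 0 (block B s '' Set.Iio j) := by
  rintro _ ⟨_, ⟨w, hw, rfl⟩, rfl⟩
  rcases lt_or_ge w s with hws | hws
  · exact Or.inl ((projGS_eq_zero_iff B s).mpr (mem_prefixSpan hws))
  · obtain ⟨u, rfl⟩ := Nat.exists_eq_add_of_le hws
    exact Or.inr ⟨u, by simp_all, rfl⟩

theorem projGS_mem_prefixSpan_block (s j : ℕ) {x : Euc m} (hx : x ∈ prefixSpan B (s + j)) :
    projGS B s x ∈ prefixSpan (block B s) j := by
  have h := mem_map_of_mem (f := ((prefixSpan B s)ᗮ.starProjection : Euc m →ₗ[ℝ] Euc m)) hx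
  rw [show prefixSpan B (s + j) = span ℝ (B '' Set.Iio (s + j)) from rfl, ← span_image] at h
  rw [prefixSpan, ← span_insert_zero]
  exact span_mono (projGS_image_subset B s j) h

theorem projGS_mem_latticeSpan_block (s j : ℕ) {x : Euc m} (hx : x ∈ latticeSpan B (s + j)) :
    projGS B s x ∈ latticeSpan (block B s) j := by
  have h := mem_map_of_mem
    (f := ((prefixSpan B s)ᗮ.starProjection : Euc m →ₗ[ℝ] Euc m).restrictScalars ℤ) hx
  rw [latticeSpan, ← span_image] at h
  rw [latticeSpan, ← span_insert_zero]
  exact span_mono (projGS_image_subset B s j) h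

theorem projGS_block_projGS (s j : ℕ) (x : Euc m) :
    projGS (block B s) j (projGS B s x) = projGS B (s + j) x := by
  refine projGS_eq_of_mem_of_sub_mem ?_ ?_
  · exact orthogonal_le (prefixSpan_block_le B s j) (projGS_mem_orthogonal B (s + j) x)
  · have h := projGS_mem_prefixSpan_block B s j (sub_projGS_mem B (s + j) x)
    have hfix : projGS B s (projGS B (s + j) x) = projGS B (s + j) x :=
      projGS_of_mem_orthogonal
        (orthogonal_le (prefixSpan_mono (by omega)) (projGS_mem_orthogonal B (s + j) x))
    rwa [projGS_apply, map_sub, ← projGS_apply, ← projGS_apply, hfix] at h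

theorem gsoVec_block (s j : ℕ) : gsoVec (block B s) j = gsoVec B (s + j) :=
  projGS_block_projGS B s j _

theorem block_block (s j : ℕ) : block (block B s) j = block B (s + j) := by
  funext u
  rw [block, block, projGS_block_projGS, ← add_assoc]
  rfl

end Blocks

theorem det_gram_pos {C : ℕ → Euc m} {l : ℕ} (hC : LinearIndependent ℝ (fun i : Fin l => C i)) :
    0 < (gram C l).det :=
  (Matrix.posDef_gram_of_linearIndependent hC).det_pos

theorem linearIndependent_block {B : ℕ → Euc m} {n : ℕ}
    (hB : LinearIndependent ℝ (fun i : Fin n => B i)) {s l : ℕ} (hsl : s + l ≤ n) :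
    LinearIndependent ℝ (fun u : Fin l => block B s u) := by
  refine Matrix.linearIndependent_of_det_gram_ne_zero ?_
  change (gram (block B s) l).det ≠ 0
  rw [det_gram_eq_prod_norm_sq, Finset.prod_ne_zero_iff]
  intro u _
  rw [gsoVec_block]
  exact pow_ne_zero 2 (norm_ne_zero_iff.mpr (gsoVec_ne_zero B hB (by omega)))

section Dual

variable {C : ℕ → Euc m} {l : ℕ}

theorem dualFam_apply (i : Fin l) : dualFam C l i = ∑ j : Fin l, (gram C l)⁻¹ j i • C j := by
  rw [dualFam, dif_pos i.2]

theorem inner_dualFam (hC : LinearIndependent ℝ (fun i : Fin l => C i)) (i j : Fin l) :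
    inner ℝ (dualFam C l i) (C j) = if i = j then (1 : ℝ) else 0 := by
  have hG : (gram C l)ᵀ = gram C l := (Matrix.isHermitian_gram ℝ fun i : Fin l => C i)
  have hunit : IsUnit (gram C l).det := (det_gram_pos hC).ne'.isUnit
  calc inner ℝ (dualFam C l i) (C j) = ((gram C l) * (gram C l)⁻¹) j i := by
        rw [dualFam_apply, sum_inner, Matrix.mul_apply]
        refine Finset.sum_congr rfl fun u _ => ?_
        rw [real_inner_smul_left, ← hG]
        exact mul_comm _ _
    _ = if i = j then 1 else 0 := by
        rw [Matrix.mul_nonsing_inv _ hunit, Matrix.one_apply]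
        exact if_congr eq_comm rfl rfl

theorem det_gram_revDual (hC : LinearIndependent ℝ (fun i : Fin l => C i)) :
    (gram (revDual C l) l).det = (gram C l).det⁻¹ := by
  have hdet := (det_gram_pos hC).ne'
  have hrev : (fun i : Fin l => revDual C l i) = fun i => dualFam C l (Fin.revPerm i) := by
    funext i
    simp only [revDual, Fin.revPerm_apply, Fin.val_rev, Nat.sub_sub, add_comm]
  have hdual : (fun i : Fin l => dualFam C l i) = fun i => ∑ j, (gram C l)⁻¹ᵀ i j • C j := by
    funext i
    exact dualFam_apply i
  change (Matrix.gram ℝ fun i : Fin l => revDual C l i).det = _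
  rw [hrev]
  change ((Matrix.gram ℝ fun i : Fin l => dualFam C l i).submatrix Fin.revPerm Fin.revPerm).det = _
  rw [Matrix.det_submatrix_equiv_self, hdual, gram_sum_smul]
  simp only [Matrix.det_mul, Matrix.det_transpose, Matrix.det_nonsing_inv, Ring.inverse_eq_inv']
  change _ * (gram C l).det * _ = _
  field_simp

theorem linearIndependent_revDual (hC : LinearIndependent ℝ (fun i : Fin l => C i)) :
    LinearIndependent ℝ (fun i : Fin l => revDual C l i) := by
  refine Matrix.linearIndependent_of_det_gram_ne_zero ?_
  change (gram (revDual C l) l).det ≠ 0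
  rw [det_gram_revDual hC]
  exact inv_ne_zero (det_gram_pos hC).ne'

theorem one_le_norm_revDual_mul_norm_gsoVec (hC : LinearIndependent ℝ (fun i : Fin l => C i))
    (hl : 0 < l) : 1 ≤ ‖revDual C l 0‖ * ‖gsoVec C (l - 1)‖ := by
  let last : Fin l := ⟨l - 1, by omega⟩
  have hd : revDual C l 0 = dualFam C l last := by simp [revDual, last]
  have horth : revDual C l 0 ∈ (prefixSpan C (l - 1))ᗮ := by
    rw [prefixSpan, mem_orthogonal_span_iff]
    rintro _ ⟨w, hw : w < l - 1, rfl⟩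
    rw [real_inner_comm, hd, inner_dualFam hC last ⟨w, by omega⟩,
      if_neg (Fin.ne_of_val_ne (by simp only [last]; omega))]
  have hinner : inner ℝ (revDual C l 0) (gsoVec C (l - 1)) = (1 : ℝ) := by
    have hlast : inner ℝ (revDual C l 0) (C (l - 1)) = (1 : ℝ) := by
      rw [hd, inner_dualFam hC last last, if_pos rfl]
    rw [← sub_sub_cancel (C (l - 1)) (gsoVec C (l - 1)), inner_sub_right, hlast,
      inner_left_of_mem_orthogonal (sub_gsoVec_mem C (l - 1)) horth, sub_zero]
  exact hinner ▸ real_inner_le_norm _ _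

end Dual

section Lambda1

variable {L : Submodule ℤ (Euc m)}

theorem lambda1_le_norm {x : Euc m} (hx : x ∈ L) (hx0 : x ≠ 0) : lambda1 L ≤ ‖x‖ :=
  csInf_le ⟨0, by rintro _ ⟨y, -, -, rfl⟩; exact norm_nonneg y⟩ ⟨x, hx, hx0, rfl⟩

theorem le_mul_lambda1 {a K : ℝ} (hK : 0 < K) (hL : ∃ x ∈ L, x ≠ 0)
    (h : ∀ x ∈ L, x ≠ 0 → a ≤ K * ‖x‖) : a ≤ K * lambda1 L := by
  obtain ⟨x₀, hx₀, hx₀0⟩ := hL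
  rw [← div_le_iff₀' hK]
  refine le_csInf ⟨_, x₀, hx₀, hx₀0, rfl⟩ ?_
  rintro _ ⟨x, hx, hx0, rfl⟩
  exact (div_le_iff₀' hK).mpr (h x hx hx0)

end Lambda1

section Hermite

variable {δ γ : ℝ} {k : ℕ}

theorem IsHermiteBound.lambda1_pow_le (hH : IsHermiteBound γ k) (hk : k ≠ 0) {v : ℕ → Euc m}
    (hv : LinearIndependent ℝ (fun i : Fin k => v i)) :
    lambda1 (latticeSpan v k) ^ (2 * k) ≤ γ ^ k * (gram v k).det := by
  have hdet : 0 ≤ (gram v k).det := (Matrix.posSemidef_gram ℝ fun i : Fin k => v i).det_nonneg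
  have hvol : (volB v k ^ ((2 : ℝ) / k)) ^ k = (gram v k).det := by
    rw [← Real.rpow_natCast, volB, ← Real.rpow_mul (Real.sqrt_nonneg _),
      div_mul_cancel₀ _ (Nat.cast_ne_zero.mpr hk), Real.rpow_two, Real.sq_sqrt hdet]
  rw [pow_mul, ← hvol, ← mul_pow]
  exact pow_le_pow_left₀ (sq_nonneg _) (hH m v hv) k

theorem SVPReduced.norm_pow_le {v : ℕ → Euc m} (hsvp : SVPReduced δ v k)
    (hH : IsHermiteBound γ k) (hk : k ≠ 0) (hv : LinearIndependent ℝ (fun i : Fin k => v i)) :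
    ‖v 0‖ ^ (2 * k) ≤ (δ ^ 2 * γ) ^ k * (gram v k).det :=
  calc ‖v 0‖ ^ (2 * k) ≤ (δ * lambda1 (latticeSpan v k)) ^ (2 * k) :=
        pow_le_pow_left₀ (norm_nonneg _) hsvp _
    _ = (δ ^ 2) ^ k * lambda1 (latticeSpan v k) ^ (2 * k) := by rw [mul_pow, pow_mul]
    _ ≤ (δ ^ 2) ^ k * (γ ^ k * (gram v k).det) :=
        mul_le_mul_of_nonneg_left (hH.lambda1_pow_le hk hv) (by positivity)
    _ = (δ ^ 2 * γ) ^ k * (gram v k).det := by ring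

theorem SVPReduced.det_gram_le_of_revDual {C : ℕ → Euc m}
    (hsvp : SVPReduced δ (revDual C k) k) (hH : IsHermiteBound γ k) (hk : k ≠ 0)
    (hC : LinearIndependent ℝ (fun i : Fin k => C i)) :
    (gram C k).det ≤ (δ ^ 2 * γ) ^ k * ‖gsoVec C (k - 1)‖ ^ (2 * k) := by
  have hD := det_gram_pos hC
  have hdual := hsvp.norm_pow_le hH hk (linearIndependent_revDual hC)
  rw [det_gram_revDual hC] at hdual
  have hcs := one_le_norm_revDual_mul_norm_gsoVec hC (Nat.pos_of_ne_zero hk)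
  calc (gram C k).det
      ≤ (gram C k).det * (‖revDual C k 0‖ * ‖gsoVec C (k - 1)‖) ^ (2 * k) :=
        le_mul_of_one_le_right hD.le (one_le_pow₀ hcs)
    _ = (gram C k).det * ‖revDual C k 0‖ ^ (2 * k) * ‖gsoVec C (k - 1)‖ ^ (2 * k) := by ring
    _ ≤ (gram C k).det * ((δ ^ 2 * γ) ^ k * (gram C k).det⁻¹) * ‖gsoVec C (k - 1)‖ ^ (2 * k) := by
        gcongr
    _ = (δ ^ 2 * γ) ^ k * ‖gsoVec C (k - 1)‖ ^ (2 * k) := by field_simp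

end Hermite

theorem norm_gsoVec_pow_le_of_svp_revDual {B : ℕ → Euc m} {n k s : ℕ} {δ γ : ℝ}
    (hB : LinearIndependent ℝ (fun i : Fin n => B i)) (hk : k ≠ 0) (hskn : s + k + 1 ≤ n)
    (hγ : 0 ≤ γ) (hH : IsHermiteBound γ k) (hprimal : SVPReduced δ (block B s) k)
    (hdual : SVPReduced δ (revDual (block B (s + 1)) k) k) :
    ‖gsoVec B s‖ ^ (k - 1) ≤ (δ ^ 2 * γ) ^ k * ‖gsoVec B (s + k)‖ ^ (k - 1) := by
  obtain ⟨j, rfl⟩ := Nat.exists_eq_add_one_of_ne_zero hk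
  have hP := hprimal.norm_pow_le hH hk (linearIndependent_block hB (by omega))
  have hP' := hdual.det_gram_le_of_revDual hH hk (linearIndependent_block hB (by omega))
  simp only [det_gram_eq_prod_norm_sq, gsoVec_block] at hP hP'
  rw [Nat.add_sub_cancel] at hP' ⊢
  rw [add_assoc, add_comm 1 j] at hP'
  refine pow_le_mul_pow_of_mul_sq_eq (norm_pos_iff.mpr (gsoVec_ne_zero B hB (by omega)))
    (norm_pos_iff.mpr (gsoVec_ne_zero B hB (by omega))) (by positivity) hP hP' ?_
  rw [Fin.prod_univ_eq_prod_range (fun u => ‖gsoVec B (s + u)‖ ^ 2),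
    Fin.prod_univ_eq_prod_range (fun u => ‖gsoVec B (s + 1 + u)‖ ^ 2),
    ← Finset.prod_range_succ (fun u => ‖gsoVec B (s + u)‖ ^ 2), Finset.prod_range_succ', mul_comm]
  congr 1
  exact Finset.prod_congr rfl fun u _ => by rw [add_assoc, add_comm 1 u]

theorem mem_latticeSpan_of_mem_prefixSpan {C : ℕ → Euc m} {L r : ℕ}
    (hC : LinearIndependent ℝ (fun i : Fin L => C i)) (hrL : r ≤ L) {x : Euc m}
    (hx : x ∈ latticeSpan C L) (hxr : x ∈ prefixSpan C r) : x ∈ latticeSpan C r := by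
  have hdisj : Disjoint (prefixSpan C r) (span ℝ (C '' Set.Ico r L)) := by
    have h := hC.disjoint_span_image (s := Fin.val ⁻¹' Set.Iio r) (t := Fin.val ⁻¹' Set.Ico r L)
      (Set.disjoint_left.mpr fun _ h₁ h₂ => absurd h₂.1 (not_le.mpr h₁))
    rwa [image_fin_val_preimage C (Set.Iio_subset_Iio hrL),
      image_fin_val_preimage C fun _ h => h.2] at h
  rw [latticeSpan, ← Set.Iio_union_Ico_eq_Iio hrL, Set.image_union, span_union, mem_sup] at hx
  obtain ⟨a, ha, b, hb, rfl⟩ := hx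
  have hreal : ∀ S : Set (Euc m), span ℤ S ≤ (span ℝ S).restrictScalars ℤ :=
    fun S => span_le_restrictScalars ℤ ℝ S
  have hb0 : b = 0 := disjoint_def.mp hdisj b
    (by simpa using sub_mem hxr (hreal _ ha)) (hreal _ hb)
  rwa [hb0, add_zero]

theorem exists_projGS_ne_zero_mem_latticeSpan_block {C : ℕ → Euc m} {p k : ℕ}
    (hC : LinearIndependent ℝ (fun i : Fin (p * k) => C i)) {x : Euc m}
    (hx : x ∈ latticeSpan C (p * k)) (hx0 : x ≠ 0) :
    ∃ t < p, projGS C (t * k) x ≠ 0 ∧ projGS C (t * k) x ∈ latticeSpan (block C (t * k)) k := by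
  have hreal : x ∈ prefixSpan C (p * k) := span_le_restrictScalars ℤ ℝ _ hx
  have hp : p ≠ 0 := by
    rintro rfl
    simp [latticeSpan] at hx
    exact hx0 hx
  have hex : ∃ t, x ∈ prefixSpan C ((t + 1) * k) := ⟨p - 1, by rwa [Nat.sub_add_cancel (by omega)]⟩
  classical
  obtain ⟨t, ht, hmin⟩ : ∃ t, x ∈ prefixSpan C ((t + 1) * k) ∧
      ∀ t' < t, x ∉ prefixSpan C ((t' + 1) * k) :=
    ⟨Nat.find hex, Nat.find_spec hex, fun _ => Nat.find_min hex⟩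
  have htp : t < p := by
    by_contra! h
    exact hmin (p - 1) (by omega) (by rwa [Nat.sub_add_cancel (by omega)])
  refine ⟨t, htp, ?_, ?_⟩
  · rw [Ne, projGS_eq_zero_iff]
    intro hmem
    cases t with
    | zero =>
      simp [prefixSpan] at hmem
      exact hx0 hmem
    | succ t => exact hmin t (by omega) hmem
  · rw [Nat.succ_mul] at ht
    exact projGS_mem_latticeSpan_block C _ _ <| mem_latticeSpan_of_mem_prefixSpan hC
      (by nlinarith) hx ht

theorem norm_gsoVec_pow_le_of_slide {B : ℕ → Euc m} {k d p n : ℕ} {δ γ : ℝ}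
    (hB : LinearIndependent ℝ (fun i : Fin n => B i)) (hk : k ≠ 0) (hn : p * k + d ≤ n)
    (hγ : 0 ≤ γ) (hH : IsHermiteBound γ k)
    (hprimal : ∀ i, i + 1 ≤ p → SVPReduced δ (block B (i * k + d)) k)
    (hdual : ∀ i, i + 2 ≤ p → SVPReduced δ (revDual (block B (i * k + d + 1)) k) k) :
    ∀ t ≤ p - 1,
      ‖gsoVec B d‖ ^ (k - 1) ≤ ((δ ^ 2 * γ) ^ k) ^ t * ‖gsoVec B (t * k + d)‖ ^ (k - 1) := by
  have hstep : ∀ i < p - 1, ‖gsoVec B (i * k + d)‖ ^ (k - 1) ≤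
      (δ ^ 2 * γ) ^ k * ‖gsoVec B ((i + 1) * k + d)‖ ^ (k - 1) := fun i hi => by
    have hik : (i + 2) * k ≤ p * k := Nat.mul_le_mul_right k (by omega)
    have h := norm_gsoVec_pow_le_of_svp_revDual hB hk (by nlinarith [Nat.pos_of_ne_zero hk]) hγ hH
      (hprimal i (by omega)) (hdual i (by omega))
    rwa [add_right_comm, ← Nat.succ_mul] at h
  simpa using le_pow_mul_of_le_mul_succ (f := fun t => ‖gsoVec B (t * k + d)‖ ^ (k - 1))
    (by positivity) hstep

theorem exists_norm_gsoVec_le_of_mem_latticeSpan {B : ℕ → Euc m} {k d p n : ℕ} {δ : ℝ}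
    (hδ : 0 ≤ δ) (hB : LinearIndependent ℝ (fun i : Fin n => B i)) (hn : p * k + d ≤ n)
    (hprimal : ∀ i, i + 1 ≤ p → SVPReduced δ (block B (i * k + d)) k) {x : Euc m}
    (hx : x ∈ latticeSpan (block B d) (p * k)) (hx0 : x ≠ 0) :
    ∃ t < p, ‖gsoVec B (t * k + d)‖ ≤ δ * ‖x‖ := by
  obtain ⟨t, htp, hy0, hy⟩ := exists_projGS_ne_zero_mem_latticeSpan_block
    (linearIndependent_block hB (by omega)) hx hx0
  rw [block_block, add_comm] at hy
  refine ⟨t, htp, ?_⟩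
  calc ‖gsoVec B (t * k + d)‖ ≤ δ * lambda1 (latticeSpan (block B (t * k + d)) k) :=
        hprimal t htp
    _ ≤ δ * ‖x‖ := by
        gcongr
        exact (lambda1_le_norm hy hy0).trans (norm_projGS_le _ _ _)

theorem gn_slide_svp_general {m k d p n : ℕ} (hp : 1 ≤ p) (hk : 2 ≤ k)
    (hn : n = p * k + d) {δ γk : ℝ} (hδ : 1 ≤ δ) (hγk : 1 ≤ γk)
    (hHk : IsHermiteBound γk k)
    (B : ℕ → Euc m) (hB : LinearIndependent ℝ (fun i : Fin n => B i))
    (hprimal : ∀ i, i + 1 ≤ p → SVPReduced δ (block B (i * k + d)) k)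
    (hdual : ∀ i, i + 2 ≤ p → DSVPReduced δ (block B (i * k + d + 1)) k) :
    ‖gsoVec B d‖ ≤ δ * (δ ^ 2 * γk) ^ (((n : ℝ) - d - k) / ((k : ℝ) - 1)) *
      lambda1 (latticeSpan (block B d) (n - d)) := by
  have hq : 1 ≤ δ ^ 2 * γk := one_le_mul_of_one_le_of_one_le (one_le_pow₀ hδ) hγk
  have hpk : 0 < p * k := Nat.mul_pos (by omega) (by omega)
  have hchain := norm_gsoVec_pow_le_of_slide hB (by omega) hn.ge (by linarith) hHk hprimal
    fun i hi => (hdual i hi).1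
  have hexp : ((k * (p - 1) : ℕ) : ℝ) / ((k - 1 : ℕ) : ℝ) = ((n : ℝ) - d - k) / ((k : ℝ) - 1) := by
    rw [hn]
    push_cast [Nat.cast_sub hp, Nat.cast_sub (by omega : 1 ≤ k)]
    ring
  refine le_mul_lambda1 (by positivity) ⟨gsoVec B d, subset_span ⟨0, Set.mem_Iio.mpr (by omega),
    rfl⟩, gsoVec_ne_zero B hB (by omega)⟩ fun x hx hx0 => ?_
  rw [show n - d = p * k by omega] at hx
  obtain ⟨t, htp, hshort⟩ :=
    exists_norm_gsoVec_le_of_mem_latticeSpan (by linarith) hB hn.ge hprimal hx hx0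
  rw [mul_comm δ, mul_assoc, ← hexp]
  refine le_rpow_div_mul_of_pow_le (norm_nonneg _) (by positivity) (by positivity) (by omega) ?_
  calc ‖gsoVec B d‖ ^ (k - 1)
      ≤ ((δ ^ 2 * γk) ^ k) ^ t * ‖gsoVec B (t * k + d)‖ ^ (k - 1) := hchain t (by omega)
    _ ≤ ((δ ^ 2 * γk) ^ k) ^ (p - 1) * (δ * ‖x‖) ^ (k - 1) := by
        gcongr
        · exact one_le_pow₀ hq
        · omega
    _ = (δ ^ 2 * γk) ^ (k * (p - 1)) * (δ * ‖x‖) ^ (k - 1) := by rw [pow_mul]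

/-- under the Gama–Nguyen slide-reduction conditions on the blocks of
`B_{[d+1,n]}`, the block `B_{[d+1,n]}` is `δ(δ²γ_k)^{(n-d-k)/(k-1)}`-SVP-reduced. -/
theorem gn_slide_svp {m k d p n : ℕ} (hp : 1 ≤ p) (hk : 2 ≤ k) (hkd : k ≤ d)
    (hn : n = p * k + d) {δ γk : ℝ} (hδ : 1 ≤ δ) (hγk : 1 ≤ γk)
    (hHk : IsHermiteBound γk k)
    (B : ℕ → Euc m) (hB : LinearIndependent ℝ (fun i : Fin n => B i))
    (hprimal : ∀ i, i + 1 ≤ p → SVPReduced δ (block B (i * k + d)) k)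
    (hdual : ∀ i, i + 2 ≤ p → DSVPReduced δ (block B (i * k + d + 1)) k) :
    ‖gsoVec B d‖ ≤ δ * (δ ^ 2 * γk) ^ (((n : ℝ) - d - k) / ((k : ℝ) - 1)) *
      lambda1 (latticeSpan (block B d) (n - d)) :=
  gn_slide_svp_general hp hk hn hδ hγk hHk B hB hprimal hdual

end
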